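/- arXiv:1211.3773 — 2 statements merged into one kernel-verified Lean document; each statement's English description precedes it below -/
import Mathlib

section
/- Let (A, L, ω) be a Lie-Rinehart algebra, V^ℓ(L) its left universal enveloping algebra (the quotient of the positive tensor algebra T_k^+(A⊕L) by the relations a⊗b − ab, a⊗ξ − a·ξ, ξ⊗η − η⊗ξ − [ξ,η], and ξ⊗a − a⊗ξ − ω(ξ)(a)), and V^r(L) the right universal enveloping algebra of L viewed as a right Lie-Rinehart algebra (quotient by the relations a⊗b − ab, ξ⊗a − ξ·a, ξ⊗η − η⊗ξ − [ξ,η], and ξ⊗a − a⊗ξ − ω(ξ)(a)). Then there is a unique k-algebra isomorphism Ξ : V^ℓ(L) → (V^r(L))^op determined by Ξ(a) = a for a ∈ A and Ξ(D) = −D for D ∈ L. -/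
/-!
Both enveloping algebras are quotients of the tensor algebra `T = T_k(A ⊕ L)`. Let `τ` be the
anti-automorphism of `T` fixing `A` and negating `L`; it is an involution. Up to an overall sign,
`τ` carries each defining relation of `V^ℓ(L)` to one of `V^r(L)` and vice versa:
`a ⊗ ξ ↦ -(ξ ⊗ a)`, `ξ ⊗ η - η ⊗ ξ ↦ -(ξ ⊗ η - η ⊗ ξ)`, while `ξ ⊗ a - a ⊗ ξ` is fixed.
So `τ` descends to `Ξ : V^ℓ(L) → V^r(L)ᵐᵒᵖ` and to `Θ : V^r(L) → V^ℓ(L)ᵐᵒᵖ`, and these are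
mutually inverse because `τ² = 1`. Uniqueness holds because `A` and `L` generate `V^ℓ(L)`.
-/

structure LieRinehartStr (k A L : Type*) [CommRing k] [CommRing A] [Algebra k A]
    [AddCommGroup L] [Module k L] [Module A L] where
  bracket : L → L → L
  anchor : L →ₗ[A] Derivation k A A
  bracket_add_left : ∀ x y z : L, bracket (x + y) z = bracket x z + bracket y z
  bracket_add_right : ∀ x y z : L, bracket x (y + z) = bracket x y + bracket x z
  bracket_smul_left : ∀ (c : k) (x y : L), bracket (c • x) y = c • bracket x y
  bracket_smul_right : ∀ (c : k) (x y : L), bracket x (c • y) = c • bracket x y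
  bracket_self : ∀ x : L, bracket x x = 0
  jacobi : ∀ x y z : L, bracket x (bracket y z) =
      bracket (bracket x y) z + bracket y (bracket x z)
  anchor_bracket : ∀ x y : L, anchor (bracket x y) = ⁅anchor x, anchor y⁆
  compat : ∀ (x y : L) (f : A), bracket x (f • y) = anchor x f • y + f • bracket x y

variable (k A L : Type*) [CommRing k] [CommRing A] [Algebra k A]
  [AddCommGroup L] [Module k L] [Module A L]

/-- the canonical map `A → T_k(A ⊕ L)`. -/
noncomputable def iotaA (a : A) : TensorAlgebra k (A × L) :=
  TensorAlgebra.ι k ((a, 0) : A × L)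

/-- the canonical map `L → T_k(A ⊕ L)`. -/
noncomputable def iotaL (x : L) : TensorAlgebra k (A × L) :=
  TensorAlgebra.ι k ((0, x) : A × L)

/-- The defining relations of the left universal enveloping algebra `V^ℓ(L)`. -/
inductive envRelL (S : LieRinehartStr k A L) :
    TensorAlgebra k (A × L) → TensorAlgebra k (A × L) → Prop
  | mulA (a b : A) : envRelL S (iotaA k A L a * iotaA k A L b) (iotaA k A L (a * b))
  | smul (a : A) (x : L) : envRelL S (iotaA k A L a * iotaL k A L x) (iotaL k A L (a • x))
  | lie (x y : L) : envRelL S (iotaL k A L x * iotaL k A L y - iotaL k A L y * iotaL k A L x)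
      (iotaL k A L (S.bracket x y))
  | anchor (x : L) (a : A) :
      envRelL S (iotaL k A L x * iotaA k A L a - iotaA k A L a * iotaL k A L x)
        (iotaA k A L (S.anchor x a))
  | one : envRelL S (iotaA k A L 1) 1

/-- The defining relations of the right universal enveloping algebra `V^r(L)`
(the right action of `A` on `L` is `x · a := a • x`, since `A` is commutative). -/
inductive envRelR (S : LieRinehartStr k A L) :
    TensorAlgebra k (A × L) → TensorAlgebra k (A × L) → Prop
  | mulA (a b : A) : envRelR S (iotaA k A L a * iotaA k A L b) (iotaA k A L (a * b))
  | smul (a : A) (x : L) : envRelR S (iotaL k A L x * iotaA k A L a) (iotaL k A L (a • x))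
  | lie (x y : L) : envRelR S (iotaL k A L x * iotaL k A L y - iotaL k A L y * iotaL k A L x)
      (iotaL k A L (S.bracket x y))
  | anchor (x : L) (a : A) :
      envRelR S (iotaL k A L x * iotaA k A L a - iotaA k A L a * iotaL k A L x)
        (iotaA k A L (S.anchor x a))
  | one : envRelR S (iotaA k A L 1) 1

set_option linter.unusedSectionVars false

open MulOpposite

theorem AlgHom.bijective_of_opComm_comp {R B C : Type*} [CommSemiring R] [Semiring B] [Semiring C]
    [Algebra R B] [Algebra R C] (f : B →ₐ[R] Cᵐᵒᵖ) (g : C →ₐ[R] Bᵐᵒᵖ)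
    (hgf : (AlgHom.opComm g).comp f = AlgHom.id R B)
    (hfg : (AlgHom.opComm f).comp g = AlgHom.id R C) :
    Function.Bijective f := by
  refine Function.bijective_iff_has_inverse.2
    ⟨fun w => MulOpposite.unop (g w.unop), fun b => ?_, fun w => ?_⟩
  · simpa using DFunLike.congr_fun hgf b
  · simpa using congrArg op (DFunLike.congr_fun hfg w.unop)

section Envelope

variable {k A L}

theorem iotaL_neg (x : L) : iotaL k A L (-x) = -iotaL k A L x := by
  rw [iotaL, iotaL, ← map_neg, Prod.neg_mk, neg_zero]

theorem ι_eq_iotaA_add_iotaL (p : A × L) :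
    TensorAlgebra.ι k p = iotaA k A L p.1 + iotaL k A L p.2 := by
  rw [iotaA, iotaL, ← map_add, Prod.mk_add_mk, add_zero, zero_add]

theorem ringQuot_algHom_ext {r : TensorAlgebra k (A × L) → TensorAlgebra k (A × L) → Prop}
    {C : Type*} [Semiring C] [Algebra k C] {f g : RingQuot r →ₐ[k] C}
    (hA : ∀ a, f (RingQuot.mkAlgHom k r (iotaA k A L a)) =
      g (RingQuot.mkAlgHom k r (iotaA k A L a)))
    (hL : ∀ x, f (RingQuot.mkAlgHom k r (iotaL k A L x)) =
      g (RingQuot.mkAlgHom k r (iotaL k A L x))) :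
    f = g :=
  RingQuot.ringQuot_ext' _ _ _ <| TensorAlgebra.hom_ext <| LinearMap.ext fun p => by
    simp [ι_eq_iotaA_add_iotaL, hA, hL]

variable (k A L) in
noncomputable def negReverse : TensorAlgebra k (A × L) →ₐ[k] (TensorAlgebra k (A × L))ᵐᵒᵖ :=
  TensorAlgebra.lift k <| (opLinearEquiv k).toLinearMap ∘ₗ
    TensorAlgebra.ι k ∘ₗ LinearMap.id.prodMap (-LinearMap.id)

@[simp]
theorem unop_negReverse_iotaA (a : A) :
    unop (negReverse k A L (iotaA k A L a)) = iotaA k A L a := by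
  simp [negReverse, iotaA]

@[simp]
theorem unop_negReverse_iotaL (x : L) :
    unop (negReverse k A L (iotaL k A L x)) = -iotaL k A L x := by
  rw [← iotaL_neg]
  simp [negReverse, iotaL]

@[simp]
theorem unop_negReverse_unop_negReverse (t : TensorAlgebra k (A × L)) :
    unop (negReverse k A L (unop (negReverse k A L t))) = t := by
  have : (AlgHom.opComm (negReverse k A L)).comp (negReverse k A L) = AlgHom.id k _ := by
    ext <;> simp [negReverse]
  simpa using DFunLike.congr_fun this t

def NegReverseRespects (r r' : TensorAlgebra k (A × L) → TensorAlgebra k (A × L) → Prop) : Prop :=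
  ∀ ⦃u v⦄, r u v → RingQuot.mkAlgHom k r' (unop (negReverse k A L u)) =
    RingQuot.mkAlgHom k r' (unop (negReverse k A L v))

theorem negReverseRespects_envRelL_envRelR (S : LieRinehartStr k A L) :
    NegReverseRespects (envRelL k A L S) (envRelR k A L S) := by
  intro u v h
  induction h with
  | mulA a b => simpa [mul_comm b a] using RingQuot.mkAlgHom_rel k (envRelR.mulA (S := S) b a)
  | smul a x => simpa using congrArg Neg.neg (RingQuot.mkAlgHom_rel k (envRelR.smul (S := S) a x))
  | lie x y => simpa using congrArg Neg.neg (RingQuot.mkAlgHom_rel k (envRelR.lie (S := S) x y))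
  | anchor x a =>
    simpa [neg_add_eq_sub] using RingQuot.mkAlgHom_rel k (envRelR.anchor (S := S) x a)
  | one => simpa using RingQuot.mkAlgHom_rel k (envRelR.one (S := S))

theorem negReverseRespects_envRelR_envRelL (S : LieRinehartStr k A L) :
    NegReverseRespects (envRelR k A L S) (envRelL k A L S) := by
  intro u v h
  induction h with
  | mulA a b => simpa [mul_comm b a] using RingQuot.mkAlgHom_rel k (envRelL.mulA (S := S) b a)
  | smul a x => simpa using congrArg Neg.neg (RingQuot.mkAlgHom_rel k (envRelL.smul (S := S) a x))
  | lie x y => simpa using congrArg Neg.neg (RingQuot.mkAlgHom_rel k (envRelL.lie (S := S) x y))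
  | anchor x a =>
    simpa [neg_add_eq_sub] using RingQuot.mkAlgHom_rel k (envRelL.anchor (S := S) x a)
  | one => simpa using RingQuot.mkAlgHom_rel k (envRelL.one (S := S))

variable {r r' : TensorAlgebra k (A × L) → TensorAlgebra k (A × L) → Prop}

noncomputable def negReverseQuot (h : NegReverseRespects r r') :
    RingQuot r →ₐ[k] (RingQuot r')ᵐᵒᵖ :=
  RingQuot.liftAlgHom k ⟨(AlgHom.op (RingQuot.mkAlgHom k r')).comp (negReverse k A L),
    fun _ _ huv => congrArg op (h huv)⟩

@[simp]
theorem negReverseQuot_mkAlgHom (h : NegReverseRespects r r') (t : TensorAlgebra k (A × L)) :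
    negReverseQuot h (RingQuot.mkAlgHom k r t) =
      op (RingQuot.mkAlgHom k r' (unop (negReverse k A L t))) :=
  RingQuot.liftAlgHom_mkAlgHom_apply _ _ _ _

theorem opComm_negReverseQuot_comp_negReverseQuot (h : NegReverseRespects r r')
    (h' : NegReverseRespects r' r) :
    (AlgHom.opComm (negReverseQuot h')).comp (negReverseQuot h) = AlgHom.id k _ :=
  RingQuot.ringQuot_ext' _ _ _ <| AlgHom.ext fun t => by simp

end Envelope

/-- there is a unique `k`-algebra isomorphism
`Ξ : V^ℓ(L) → (V^r(L))ᵒᵖ` with `Ξ(a) = a` and `Ξ(D) = -D`. -/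
theorem statement3 (S : LieRinehartStr k A L) :
    ∃! Xi : RingQuot (envRelL k A L S) →ₐ[k] (RingQuot (envRelR k A L S))ᵐᵒᵖ,
      (∀ a : A, Xi (RingQuot.mkAlgHom k (envRelL k A L S) (iotaA k A L a)) =
          MulOpposite.op (RingQuot.mkAlgHom k (envRelR k A L S) (iotaA k A L a))) ∧
      (∀ x : L, Xi (RingQuot.mkAlgHom k (envRelL k A L S) (iotaL k A L x)) =
          MulOpposite.op (RingQuot.mkAlgHom k (envRelR k A L S) (iotaL k A L (-x)))) ∧
      Function.Bijective ⇑Xi := by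
  have hL := negReverseRespects_envRelL_envRelR S
  have hR := negReverseRespects_envRelR_envRelL S
  refine ⟨negReverseQuot hL, ⟨fun a => by simp, fun x => by simp [iotaL_neg],
    AlgHom.bijective_of_opComm_comp _ (negReverseQuot hR)
      (opComm_negReverseQuot_comp_negReverseQuot hL hR)
      (opComm_negReverseQuot_comp_negReverseQuot hR hL)⟩, ?_⟩
  rintro Xi ⟨hXiA, hXiL, -⟩
  exact ringQuot_algHom_ext (fun a => by simp [hXiA]) (fun x => by simp [hXiL, iotaL_neg])
end

section
/- Let A be a commutative k-algebra which is a Poisson algebra with bracket {·,·}. Then the A-module D_A of Kähler differentials of A over k carries a Lie-Rinehart algebra structure over A, with Lie bracket determined by [df, dg] = d{f,g} and [df, g·dg'] = {f,g}·dg' + g·[df, dg'], and anchor ω(df) = {f, ·} (the Hamiltonian derivation of f); in particular the bracket so defined satisfies the Jacobi identity and the anchor is an A-linear Lie algebra morphism to Der_k(A) satisfying the Lie-Rinehart compatibility condition. -/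
/-!
The bracket is the Koszul bracket of the Poisson bivector `π`,
`[x, y] = L_{π♯ x} y - L_{π♯ y} x - d (π (x, y))`, where `π♯ : Ω → Der A` is induced by the
Hamiltonian map `f ↦ {f, ·}` and `L` is the Lie derivative of forms. On exact forms it gives
`[df, dg] = d{f, g}`, and the Leibniz rule in the second argument holds by construction. That `π♯`
is a Lie morphism, and the Jacobi identity, are checked on exact forms, where both reduce to the
Jacobi identity of `{·, ·}`: the Leibniz rule together with `π♯ [x, y] = [π♯ x, π♯ y]` makes the
Jacobiator `A`-linear in each argument, so it vanishes once it vanishes on `df, dg, dh`.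
-/

theorem Derivation.commutator_smul_right {k A : Type*} [CommRing k] [CommRing A] [Algebra k A]
    (X Y : Derivation k A A) (a : A) : ⁅X, a • Y⁆ = a • ⁅X, Y⁆ + X a • Y := by
  ext b
  simp only [Derivation.commutator_apply, Derivation.smul_apply, Derivation.add_apply,
    smul_eq_mul, Derivation.leibniz]
  ring

theorem Derivation.apply_apply_eq_lie_of_jacobi {k A : Type*} [CommRing k] [CommRing A]
    [Algebra k A] (H : Derivation k A (Derivation k A A)) (hskew : ∀ f g, H g f = -H f g)
    (hjac : ∀ f g h, H f (H g h) + H g (H h f) + H h (H f g) = 0) (f g : A) :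
    H (H f g) = ⁅H f, H g⁆ := by
  ext a
  have h := hjac f g a
  rw [hskew f a, map_neg] at h
  rw [Derivation.commutator_apply, hskew a]
  linear_combination -h

namespace KaehlerDifferential

open Finsupp

variable {k A : Type*} [CommRing k] [CommRing A] [Algebra k A]

theorem induction_on {p : Ω[A⁄k] → Prop} (x : Ω[A⁄k]) (hD : ∀ f, p (D k A f))
    (hadd : ∀ x y, p x → p y → p (x + y)) (hsmul : ∀ (a : A) x, p x → p (a • x)) : p x := by
  have hx : x ∈ Submodule.span A (Set.range (D k A)) := by
    rw [span_range_derivation]; trivial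
  induction hx using Submodule.span_induction with
  | mem _ h => obtain ⟨f, rfl⟩ := h; exact hD f
  | zero => simpa using hD 1
  | add x y _ _ hx hy => exact hadd x y hx hy
  | smul a x _ hx => exact hsmul a x hx

section LieDerivative

variable (X : Derivation k A A)

noncomputable def lieDerivFree : (A →₀ A) →ₗ[k] Ω[A⁄k] :=
  lsum k fun g => ((LinearMap.toSpanSingleton A _ (D k A g)).restrictScalars k) ∘ₗ X.toLinearMap
    + (LinearMap.toSpanSingleton A _ (D k A (X g))).restrictScalars k

@[simp]
theorem lieDerivFree_single (g f : A) :
    lieDerivFree X (single g f) = X f • D k A g + f • D k A (X g) := by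
  simp [lieDerivFree, LinearMap.toSpanSingleton_apply]

theorem lieDerivFree_smul (a : A) (v : A →₀ A) :
    lieDerivFree X (a • v) = a • lieDerivFree X v + X a • linearCombination A (D k A) v := by
  induction v using Finsupp.induction_linear with
  | zero => simp
  | add v w hv hw => simp only [smul_add, map_add, hv, hw]; abel
  | single g f =>
    simp only [smul_single, smul_eq_mul, lieDerivFree_single, linearCombination_single,
      Derivation.leibniz]
    module

theorem kerTotal_le_ker_lieDerivFree :
    (kerTotal k A).restrictScalars k ≤ LinearMap.ker (lieDerivFree X) := by
  intro v hv
  replace hv : v ∈ kerTotal k A := hv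
  induction hv using Submodule.span_induction with
  | mem v h =>
    rcases h with (⟨⟨f, g⟩, rfl⟩ | ⟨⟨f, g⟩, rfl⟩) | ⟨c, rfl⟩
    · simp
    · simp only [LinearMap.mem_ker, map_sub, map_add, lieDerivFree_single, Derivation.leibniz,
        Derivation.map_one_eq_zero, smul_eq_mul]
      module
    · simp
  | zero => exact zero_mem _
  | add v w _ _ hv hw => exact add_mem hv hw
  | smul a v hv' hv =>
    have hv'' : linearCombination A (D k A) v = 0 := by
      rw [← LinearMap.mem_ker, kerTotal_eq]; exact hv'
    rw [LinearMap.mem_ker, lieDerivFree_smul, hv, hv'', smul_zero, smul_zero, add_zero]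

/-- The Lie derivative `L_X (f • d g) = X f • d g + f • d (X g)` (`lieDeriv_smul_D`), defined on the
presentation `(A →₀ A) ⧸ kerTotal k A` of `Ω[A⁄k]`. -/
noncomputable def lieDeriv : Ω[A⁄k] →ₗ[k] Ω[A⁄k] :=
  ((kerTotal k A).restrictScalars k).liftQ (lieDerivFree X) (kerTotal_le_ker_lieDerivFree X) ∘ₗ
    (Submodule.Quotient.restrictScalarsEquiv k _).symm.toLinearMap ∘ₗ
    ((quotKerTotalEquiv k A).symm.restrictScalars k).toLinearMap

theorem lieDeriv_linearCombination (v : A →₀ A) :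
    lieDeriv X (linearCombination A (D k A) v) = lieDerivFree X v := by
  have : (quotKerTotalEquiv k A).symm (linearCombination A (D k A) v) = Submodule.Quotient.mk v :=
    (LinearEquiv.symm_apply_eq _).mpr rfl
  simp [lieDeriv, this]

theorem lieDeriv_smul_D (f g : A) :
    lieDeriv X (f • D k A g) = X f • D k A g + f • D k A (X g) := by
  simpa using lieDeriv_linearCombination X (single g f)

@[simp]
theorem lieDeriv_D (g : A) : lieDeriv X (D k A g) = D k A (X g) := by
  simpa using lieDeriv_smul_D X 1 g

theorem lieDeriv_leibniz (a : A) (x : Ω[A⁄k]) :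
    lieDeriv X (a • x) = X a • x + a • lieDeriv X x := by
  induction x using induction_on generalizing a with
  | hD g => rw [lieDeriv_smul_D, lieDeriv_D]
  | hadd x y hx hy => simp only [smul_add, map_add, hx, hy]; abel
  | hsmul b x hx =>
    simp only [smul_smul, hx, Derivation.leibniz, smul_eq_mul, add_smul, smul_add]
    module

end LieDerivative

theorem lieDeriv_add (X Y : Derivation k A A) (x : Ω[A⁄k]) :
    lieDeriv (X + Y) x = lieDeriv X x + lieDeriv Y x := by
  induction x using induction_on with
  | hD g => simp
  | hadd x y hx hy => simp only [map_add, hx, hy]; abel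
  | hsmul a x hx => simp only [lieDeriv_leibniz, hx, Derivation.add_apply, add_smul, smul_add]; abel

theorem lieDeriv_smul (a : A) (X : Derivation k A A) (x : Ω[A⁄k]) :
    lieDeriv (a • X) x = a • lieDeriv X x + X.liftKaehlerDifferential x • D k A a := by
  induction x using induction_on with
  | hD g => simp [Derivation.leibniz]
  | hadd x y hx hy => simp only [map_add, hx, hy, add_smul, smul_add]; abel
  | hsmul b x hx =>
    simp only [lieDeriv_leibniz, hx, Derivation.smul_apply, map_smul, smul_add, smul_smul,
      smul_eq_mul]
    module

theorem lieDeriv_smul_of_tower (c : k) (X : Derivation k A A) (x : Ω[A⁄k]) :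
    lieDeriv (c • X) x = c • lieDeriv X x := by
  rw [← algebraMap_smul A c X, lieDeriv_smul, Derivation.map_algebraMap, smul_zero, add_zero,
    algebraMap_smul]

section Poisson

variable (H : Derivation k A (Derivation k A A))

noncomputable def anchor : Ω[A⁄k] →ₗ[A] Derivation k A A := H.liftKaehlerDifferential

@[simp]
theorem anchor_D (f : A) : anchor H (D k A f) = H f :=
  H.liftKaehlerDifferential_comp_D f

noncomputable def pairing : Ω[A⁄k] →ₗ[A] Ω[A⁄k] →ₗ[A] A :=
  (linearMapEquivDerivation k A).symm.toLinearMap ∘ₗ anchor H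

theorem pairing_apply (x y : Ω[A⁄k]) :
    pairing H x y = (anchor H x).liftKaehlerDifferential y := rfl

@[simp]
theorem pairing_D_D (f g : A) : pairing H (D k A f) (D k A g) = H f g := by
  simp [pairing_apply]

noncomputable def koszulBracket : Ω[A⁄k] →ₗ[k] Ω[A⁄k] →ₗ[k] Ω[A⁄k] :=
  LinearMap.mk₂ k
    (fun x y => lieDeriv (anchor H x) y - lieDeriv (anchor H y) x - D k A (pairing H x y))
    (fun x x' y => by simp only [map_add, lieDeriv_add, LinearMap.add_apply]; abel)
    (fun c x y => by
      simp only [LinearMap.map_smul_of_tower, lieDeriv_smul_of_tower, LinearMap.smul_apply,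
        map_smul, Derivation.map_smul, smul_sub])
    (fun x y y' => by simp only [map_add, lieDeriv_add]; abel)
    (fun c x y => by
      simp only [LinearMap.map_smul_of_tower, lieDeriv_smul_of_tower, map_smul, Derivation.map_smul,
        smul_sub])

theorem koszulBracket_apply (x y : Ω[A⁄k]) : koszulBracket H x y =
    lieDeriv (anchor H x) y - lieDeriv (anchor H y) x - D k A (pairing H x y) := rfl

noncomputable def jacobiator (x y z : Ω[A⁄k]) : Ω[A⁄k] :=
  koszulBracket H x (koszulBracket H y z) - koszulBracket H (koszulBracket H x y) z
    - koszulBracket H y (koszulBracket H x z)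

theorem jacobiator_add_middle (x y y' z : Ω[A⁄k]) :
    jacobiator H x (y + y') z = jacobiator H x y z + jacobiator H x y' z := by
  simp only [jacobiator, map_add, LinearMap.add_apply]; abel

theorem jacobiator_add_right (x y z z' : Ω[A⁄k]) :
    jacobiator H x y (z + z') = jacobiator H x y z + jacobiator H x y z' := by
  simp only [jacobiator, map_add]; abel

variable {H} (halt : ∀ f, H f f = 0)
include halt

theorem pairing_swap (x y : Ω[A⁄k]) : pairing H y x = -pairing H x y := by
  induction x using induction_on generalizing y with
  | hD f =>
    induction y using induction_on with
    | hD g =>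
      have h := halt (f + g)
      simp only [map_add, Derivation.add_apply, halt, zero_add, add_zero] at h
      simp only [pairing_D_D]
      linear_combination h
    | hadd y y' hy hy' => simp only [map_add, LinearMap.add_apply, hy, hy', neg_add]
    | hsmul a y hy => simp only [map_smul, LinearMap.smul_apply, hy, smul_neg]
  | hadd x x' hx hx' => simp only [map_add, LinearMap.add_apply, hx, hx', neg_add]
  | hsmul a x hx => simp only [map_smul, LinearMap.smul_apply, hx, smul_neg]

theorem pairing_self (x : Ω[A⁄k]) : pairing H x x = 0 := by
  induction x using induction_on with
  | hD f => simp [halt]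
  | hadd x y hx hy =>
    simp only [map_add, LinearMap.add_apply, hx, hy, pairing_swap halt x y]
    ring
  | hsmul a x hx => simp [hx]

theorem koszulBracket_D_D (f g : A) : koszulBracket H (D k A f) (D k A g) = D k A (H f g) := by
  have hswap := pairing_swap halt (D k A f) (D k A g)
  simp only [pairing_D_D] at hswap
  simp only [koszulBracket_apply, anchor_D, lieDeriv_D, pairing_D_D, hswap, map_neg]
  abel

theorem koszulBracket_self (x : Ω[A⁄k]) : koszulBracket H x x = 0 := by
  rw [koszulBracket_apply, pairing_self halt, map_zero, sub_self, sub_zero]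

theorem koszulBracket_swap (x y : Ω[A⁄k]) : koszulBracket H y x = -koszulBracket H x y := by
  rw [koszulBracket_apply, koszulBracket_apply, pairing_swap halt, map_neg]
  abel

theorem koszulBracket_smul_right (x y : Ω[A⁄k]) (a : A) :
    koszulBracket H x (a • y) = anchor H x a • y + a • koszulBracket H x y := by
  simp only [koszulBracket_apply, lieDeriv_leibniz, map_smul, lieDeriv_smul, ← pairing_apply,
    pairing_swap halt y x, smul_eq_mul, Derivation.leibniz]
  module

theorem koszulBracket_smul_left (a : A) (x y : Ω[A⁄k]) :
    koszulBracket H (a • x) y = a • koszulBracket H x y - anchor H y a • x := by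
  rw [koszulBracket_swap halt y, koszulBracket_smul_right halt, koszulBracket_swap halt x y]
  simp only [smul_neg]
  abel

theorem jacobiator_swap (x y z : Ω[A⁄k]) : jacobiator H y x z = -jacobiator H x y z := by
  simp only [jacobiator, koszulBracket_swap halt x y, map_neg, LinearMap.neg_apply]
  abel

variable (hjac : ∀ f g, H (H f g) = ⁅H f, H g⁆)
include hjac

theorem anchor_koszulBracket (x y : Ω[A⁄k]) :
    anchor H (koszulBracket H x y) = ⁅anchor H x, anchor H y⁆ := by
  have extend : ∀ x, (∀ g, anchor H (koszulBracket H x (D k A g)) = ⁅anchor H x, H g⁆) →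
      ∀ y, anchor H (koszulBracket H x y) = ⁅anchor H x, anchor H y⁆ := by
    intro x hx y
    induction y using induction_on with
    | hD g => rw [hx, anchor_D]
    | hadd y y' hy hy' => rw [map_add, map_add, map_add, hy, hy', lie_add]
    | hsmul a y hy =>
      rw [koszulBracket_smul_right halt, map_add, map_smul, map_smul, hy, map_smul,
        Derivation.commutator_smul_right, add_comm]
  have hD : ∀ f y, anchor H (koszulBracket H (D k A f) y) = ⁅H f, anchor H y⁆ := fun f => by
    simpa using extend (D k A f) fun g => by
      rw [koszulBracket_D_D halt, anchor_D, anchor_D, hjac]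
  refine extend x (fun g => ?_) y
  rw [koszulBracket_swap halt (D k A g), map_neg, hD, lie_skew]

theorem jacobiator_smul_right (a : A) (x y z : Ω[A⁄k]) :
    jacobiator H x y (a • z) = a • jacobiator H x y z := by
  simp only [jacobiator, koszulBracket_smul_right halt, map_add, anchor_koszulBracket halt hjac,
    Derivation.commutator_apply, smul_sub, sub_smul]
  abel

theorem jacobiator_smul_middle (a : A) (x y z : Ω[A⁄k]) :
    jacobiator H x (a • y) z = a • jacobiator H x y z := by
  simp only [jacobiator, koszulBracket_smul_left halt, koszulBracket_smul_right halt, map_add,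
    map_sub, LinearMap.add_apply, anchor_koszulBracket halt hjac, Derivation.commutator_apply,
    smul_sub, sub_smul]
  abel

theorem jacobiator_D_D_D (f g h : A) : jacobiator H (D k A f) (D k A g) (D k A h) = 0 := by
  have hjacD := congrArg (fun X : Derivation k A A => D k A (X h)) (hjac f g)
  simp only [Derivation.commutator_apply, map_sub] at hjacD
  simp only [jacobiator, koszulBracket_D_D halt, hjacD]
  abel

theorem jacobiator_eq_zero (x y z : Ω[A⁄k]) : jacobiator H x y z = 0 := by
  have extend : ∀ x, (∀ g h, jacobiator H x (D k A g) (D k A h) = 0) →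
      ∀ y z, jacobiator H x y z = 0 := by
    intro x hx y
    induction y using induction_on with
    | hD g =>
      intro z
      induction z using induction_on with
      | hD h => exact hx g h
      | hadd z z' hz hz' => rw [jacobiator_add_right, hz, hz', add_zero]
      | hsmul a z hz => rw [jacobiator_smul_right halt hjac, hz, smul_zero]
    | hadd y y' hy hy' => intro z; rw [jacobiator_add_middle, hy, hy', add_zero]
    | hsmul a y hy => intro z; rw [jacobiator_smul_middle halt hjac, hy, smul_zero]
  refine extend x (fun g h => ?_) y z
  rw [← neg_eq_zero, ← jacobiator_swap halt,
    extend (D k A g) (fun g' h' => jacobiator_D_D_D halt hjac g g' h')]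

end Poisson

noncomputable def lieRinehartStr (H : Derivation k A (Derivation k A A)) (halt : ∀ f, H f f = 0)
    (hjac : ∀ f g, H (H f g) = ⁅H f, H g⁆) : LieRinehartStr k A Ω[A⁄k] where
  bracket x y := koszulBracket H x y
  anchor := anchor H
  bracket_add_left x x' y := by rw [map_add, LinearMap.add_apply]
  bracket_add_right x y y' := map_add _ y y'
  bracket_smul_left c x y := by rw [map_smul, LinearMap.smul_apply]
  bracket_smul_right c x y := map_smul _ c y
  bracket_self := koszulBracket_self halt
  jacobi x y z := by
    rw [← sub_eq_zero, ← sub_sub]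
    exact jacobiator_eq_zero halt hjac x y z
  anchor_bracket := anchor_koszulBracket halt hjac
  compat := koszulBracket_smul_right halt

end KaehlerDifferential

namespace PoissonBracket

variable {k A : Type*} [CommRing k] [CommRing A] [Algebra k A] (P : A → A → A)
  (hadd1 : ∀ f g h : A, P (f + g) h = P f h + P g h)
  (hadd2 : ∀ f g h : A, P f (g + h) = P f g + P f h)
  (hsm1 : ∀ (c : k) (f g : A), P (c • f) g = c • P f g)
  (hsm2 : ∀ (c : k) (f g : A), P f (c • g) = c • P f g)
  (hleib : ∀ f g h : A, P f (g * h) = P f g * h + g * P f h)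
  (hskew : ∀ f g : A, P g f = -P f g)

include hadd1 hadd2 in
theorem swap_of_alternating (halt : ∀ f : A, P f f = 0) (f g : A) : P g f = -P f g := by
  have h := halt (f + g)
  rw [hadd1, hadd2, hadd2, halt, halt] at h
  linear_combination h

def hamiltonian (f : A) : Derivation k A A :=
  Derivation.mk' ⟨⟨P f, hadd2 f⟩, fun c g => hsm2 c f g⟩ fun a b => by
    simp only [LinearMap.coe_mk, AddHom.coe_mk, hleib, smul_eq_mul]
    ring

def hamiltonianDerivation : Derivation k A (Derivation k A A) :=
  Derivation.mk'
    ⟨⟨hamiltonian P hadd2 hsm2 hleib, fun f g => Derivation.ext (hadd1 f g)⟩,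
      fun c f => Derivation.ext (hsm1 c f)⟩
    fun f g => Derivation.ext fun a => by
      change P (f * g) a = f * P g a + g * P f a
      rw [hskew a, hskew a g, hskew a f, hleib]
      ring

end PoissonBracket

open KaehlerDifferential PoissonBracket in
theorem statement15_general (k A : Type*) [Field k] [CommRing A] [Algebra k A]
    (P : A → A → A)
    (hadd1 : ∀ f g h : A, P (f + g) h = P f h + P g h)
    (hadd2 : ∀ f g h : A, P f (g + h) = P f g + P f h)
    (hsm1 : ∀ (c : k) (f g : A), P (c • f) g = c • P f g)
    (hsm2 : ∀ (c : k) (f g : A), P f (c • g) = c • P f g)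
    (halt : ∀ f : A, P f f = 0)
    (hjac : ∀ f g h : A, P f (P g h) + P g (P h f) + P h (P f g) = 0)
    (hleib : ∀ f g h : A, P f (g * h) = P f g * h + g * P f h) :
    ∃ S : LieRinehartStr k A (KaehlerDifferential k A),
      (∀ f g : A, S.bracket (KaehlerDifferential.D k A f) (KaehlerDifferential.D k A g) =
          KaehlerDifferential.D k A (P f g)) ∧
      (∀ f g g' : A, S.bracket (KaehlerDifferential.D k A f)
            (g • KaehlerDifferential.D k A g') =
          P f g • KaehlerDifferential.D k A g' +
            g • S.bracket (KaehlerDifferential.D k A f) (KaehlerDifferential.D k A g')) ∧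
      (∀ f a : A, S.anchor (KaehlerDifferential.D k A f) a = P f a) := by
  have hskew := swap_of_alternating P hadd1 hadd2 halt
  let H := hamiltonianDerivation P hadd1 hadd2 hsm1 hsm2 hleib hskew
  have hjacH : ∀ f g, H (H f g) = ⁅H f, H g⁆ := H.apply_apply_eq_lie_of_jacobi hskew hjac
  refine ⟨lieRinehartStr H halt hjacH, koszulBracket_D_D (H := H) halt, fun f g g' => ?_,
    fun f a => DFunLike.congr_fun (anchor_D H f) a⟩
  have h := koszulBracket_smul_right (H := H) halt (D k A f) (D k A g') g
  rwa [anchor_D] at h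

open KaehlerDifferential in
/-- the Kähler differentials of a Poisson algebra form a
Lie-Rinehart algebra, with `[df, dg] = d{f,g}`, the Leibniz-type rule
`[df, g·dg'] = {f,g}·dg' + g·[df,dg']`, and anchor `ω(df) = {f, ·}`. -/
theorem statement15 (k A : Type*) [Field k] [CharZero k] [CommRing A] [Algebra k A]
    (P : A → A → A)
    (hadd1 : ∀ f g h : A, P (f + g) h = P f h + P g h)
    (hadd2 : ∀ f g h : A, P f (g + h) = P f g + P f h)
    (hsm1 : ∀ (c : k) (f g : A), P (c • f) g = c • P f g)
    (hsm2 : ∀ (c : k) (f g : A), P f (c • g) = c • P f g)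
    (halt : ∀ f : A, P f f = 0)
    (hjac : ∀ f g h : A, P f (P g h) + P g (P h f) + P h (P f g) = 0)
    (hleib : ∀ f g h : A, P f (g * h) = P f g * h + g * P f h) :
    ∃ S : LieRinehartStr k A (KaehlerDifferential k A),
      (∀ f g : A, S.bracket (KaehlerDifferential.D k A f) (KaehlerDifferential.D k A g) =
          KaehlerDifferential.D k A (P f g)) ∧
      (∀ f g g' : A, S.bracket (KaehlerDifferential.D k A f)
            (g • KaehlerDifferential.D k A g') =
          P f g • KaehlerDifferential.D k A g' +
            g • S.bracket (KaehlerDifferential.D k A f) (KaehlerDifferential.D k A g')) ∧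
      (∀ f a : A, S.anchor (KaehlerDifferential.D k A f) a = P f a) :=
  statement15_general k A P hadd1 hadd2 hsm1 hsm2 halt hjac hleib
end
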